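/- Let a = g(α) ∈ ℤ[α], where g(x) = a_0 + a_1 x + ⋯ + a_{m−1}x^{m−1} has integer coefficients, let s be a positive integer with a/s ∉ ℤ, and let d be a positive real number with d ≥ (m−1)(1 + max(opc(a), s)^m·P_α·S_α^{m+1}). Then for every ε with 0 < ε ≤ 1/d, both |g(α±ε) − g(α)| < |a − s⌊a/s⌋| and |g(α±ε) − g(α)| < |a − s⌈a/s⌉| hold (for both choices of sign). -/

import Mathlib

/-!
Write `A = g(α)` and let `z` be `⌊A/s⌋` or `⌈A/s⌉`, so that `0 < |A - s z| ≤ s`. Absorbing `s z`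
into the constant coefficient gives `A - s z = h(α)` with integer coefficients bounded by
`H = max(opc a, s) · S_α`. As a nonzero algebraic integer of `ℚ(α)`, `h(α)` has norm at least `1`
in absolute value, while each of its other `m - 1` conjugates `h(σ α)` is at most `H · M_α` by
Cauchy's bound `|σ α| ≤ 1 + ‖f‖_∞`; hence `|A - s z| ≥ (H M_α)^{-(m-1)}`. On the other side,
`|g(α ± ε) - g(α)| ≤ ε m (m - 1) max(opc a, s) ((1 + ε) max(1, |α|))^{m-2}`, and the choice of `d`
makes this smaller, the factor `(1 + ε)^{m-2} ≤ √2^{m-1}` being paid for by `‖f‖₂ ≥ √2`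
(irreducibility forces `f(0) ≠ 0`).
-/

open Polynomial Finset

/-- The Euclidean norm of the coefficient vector `(p_0, …, p_{d-1})` of a polynomial. -/
noncomputable def normTwo (d : ℕ) (p : Polynomial ℤ) : ℝ :=
  Real.sqrt (∑ i ∈ Finset.range d, ((p.coeff i : ℝ)) ^ 2)

/-- `‖f‖_∞` over the coefficients `f_0, …, f_{m-1}`. -/
def fninf (m : ℕ) (f : Polynomial ℤ) : ℤ :=
  ((Finset.univ.sup fun i : Fin m => (f.coeff (i : ℕ)).natAbs : ℕ) : ℤ)

/-- `M_α = m (1 + ‖f‖_∞)^{m-1}`. -/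
noncomputable def Malpha (m : ℕ) (f : Polynomial ℤ) : ℝ :=
  (m : ℝ) * (1 + (fninf m f : ℝ)) ^ (m - 1)

/-- `P_α = m ‖f‖₂^{m-1} (M_α + √m)^{m-1}`. -/
noncomputable def Palpha (m : ℕ) (f : Polynomial ℤ) : ℝ :=
  (m : ℝ) * normTwo (m + 1) f ^ (m - 1) * (Malpha m f + Real.sqrt m) ^ (m - 1)

/-- `S_α = 1 + |α| + ⋯ + |α|^{m-1}`. -/
noncomputable def Salpha (m : ℕ) (α : ℝ) : ℝ := ∑ k ∈ Finset.range m, |α| ^ k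

/-- `opc a` for a coefficient vector `a`. -/
def opc {m : ℕ} (a : Fin m → ℤ) : ℤ :=
  ((Finset.univ.sup fun i => (a i).natAbs : ℕ) : ℤ)

lemma Polynomial.coeff_zero_ne_zero_of_irreducible {K : Type*} [Field K] {p : K[X]}
    (hp : Irreducible p) (hdeg : 2 ≤ p.natDegree) : p.coeff 0 ≠ 0 := by
  intro h0
  have hroot : p.IsRoot 0 := by rwa [IsRoot, ← coeff_zero_eq_eval_zero]
  have : p.natDegree = 1 :=
    natDegree_eq_of_degree_eq_some (degree_eq_one_of_irreducible_of_root hp hroot)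
  omega

lemma sqrt_two_le_normTwo {m : ℕ} (hm : 1 ≤ m) {f : ℤ[X]} (hmonic : f.Monic)
    (hdeg : f.natDegree = m) (h0 : f.coeff 0 ≠ 0) : √2 ≤ normTwo (m + 1) f := by
  have hlead : f.coeff m = 1 := hdeg ▸ hmonic.coeff_natDegree
  have h0sq : (1 : ℝ) ≤ (f.coeff 0 : ℝ) ^ 2 := by
    rw [← sq_abs, one_le_sq_iff₀ (abs_nonneg _)]
    exact_mod_cast Int.one_le_abs h0
  apply Real.sqrt_le_sqrt
  calc (2 : ℝ) ≤ ∑ i ∈ {0, m}, (f.coeff i : ℝ) ^ 2 := by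
        rw [sum_pair (by omega), hlead]; push_cast; linarith
    _ ≤ ∑ i ∈ range (m + 1), (f.coeff i : ℝ) ^ 2 := by
        refine sum_le_sum_of_subset_of_nonneg ?_ fun _ _ _ => sq_nonneg _
        intro i; simp only [mem_insert, mem_singleton, mem_range]; omega

lemma fninf_nonneg (m : ℕ) (f : ℤ[X]) : 0 ≤ fninf m f := by
  simp [fninf]

lemma norm_le_one_add_fninf {m : ℕ} {f : ℤ[X]} (hmonic : f.Monic) (hdeg : f.natDegree = m)
    {z : ℂ} (hz : aeval z f = 0) : ‖z‖ ≤ 1 + fninf m f := by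
  set g := f.map (Int.castRingHom ℂ)
  have hg : g.Monic := hmonic.map _
  have hroot : g.IsRoot z := by rw [IsRoot, eval_map]; exact hz
  have hcoeff : ∀ i ∈ range m, ‖g.coeff i‖₊ ≤ (fninf m f).toNat := by
    intro i hi
    have hle := le_sup (f := fun i : Fin m => (f.coeff i).natAbs) (mem_univ ⟨i, mem_range.1 hi⟩)
    rw [← NNReal.coe_le_coe]
    simp only [g, coeff_map, eq_intCast, coe_nnnorm, Complex.norm_intCast, fninf,
      Int.toNat_natCast, NNReal.coe_natCast, ← Int.cast_abs, Int.abs_eq_natAbs, Int.cast_natCast]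
    exact_mod_cast hle
  have hbound : g.cauchyBound ≤ 1 + (fninf m f).toNat := by
    rw [cauchyBound, hg.leadingCoeff, nnnorm_one, div_one, hmonic.natDegree_map, hdeg, add_comm]
    gcongr
    exact Finset.sup_le hcoeff
  calc ‖z‖ ≤ g.cauchyBound := (hroot.norm_lt_cauchyBound hg.ne_zero).le
    _ ≤ 1 + (fninf m f).toNat := by exact_mod_cast hbound
    _ = 1 + fninf m f := by simp [fninf]

lemma Malpha_nonneg (m : ℕ) (f : ℤ[X]) : 0 ≤ Malpha m f := by
  have := fninf_nonneg m f
  unfold Malpha; positivity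

lemma Palpha_nonneg (m : ℕ) (f : ℤ[X]) : 0 ≤ Palpha m f := by
  have := Malpha_nonneg m f
  unfold Palpha normTwo; positivity

lemma max_one_abs_pow_le_Salpha {m k : ℕ} (hk : k < m) (x : ℝ) : max 1 |x| ^ k ≤ Salpha m x := by
  have hterm : ∀ j < m, |x| ^ j ≤ Salpha m x := fun j hj =>
    single_le_sum (f := fun j => |x| ^ j) (fun _ _ => by positivity) (mem_range.2 hj)
  rcases max_choice 1 |x| with h | h <;> rw [h]
  · simpa using hterm 0 (by omega)
  · exact hterm k hk

lemma one_le_Salpha {m : ℕ} (hm : 0 < m) (x : ℝ) : 1 ≤ Salpha m x := by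
  simpa using max_one_abs_pow_le_Salpha hm x

lemma Salpha_succ (n : ℕ) (x : ℝ) : Salpha (n + 1) x = 1 + ∑ i : Fin n, |x| ^ ((i : ℕ) + 1) := by
  rw [Salpha, sum_range_succ', pow_zero, add_comm,
    Fin.sum_univ_eq_sum_range (fun i => |x| ^ (i + 1))]

lemma abs_le_opc {m : ℕ} (a : Fin m → ℤ) (i : Fin m) : |(a i : ℝ)| ≤ opc a := by
  have := le_sup (f := fun i => (a i).natAbs) (mem_univ i)
  rw [opc, ← Int.cast_abs, Int.abs_eq_natAbs]
  exact_mod_cast this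

lemma one_add_pow_le_sqrt_two_pow {k : ℕ} {ε : ℝ} (hε : 0 ≤ ε) (hεk : ε ≤ 1 / (k + 1)) :
    (1 + ε) ^ k ≤ √2 ^ (k + 1) := by
  have h1 : (1 : ℝ) ≤ √2 := by simp [Real.one_le_sqrt]
  match k, hεk with
  | 0, _ => simp
  | 1, hεk => rw [Real.sq_sqrt zero_le_two]; norm_num at hεk; linarith
  | k + 2, hεk =>
    have h43 : (4 : ℝ) / 3 ≤ √2 := Real.le_sqrt_of_sq_le (by norm_num)
    have hε3 : ε ≤ 1 / 3 :=
      hεk.trans (by gcongr; push_cast; linarith [(k.cast_nonneg : (0 : ℝ) ≤ k)])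
    calc (1 + ε) ^ (k + 2) ≤ √2 ^ (k + 2) := by gcongr; linarith
      _ ≤ √2 ^ (k + 2 + 1) := pow_le_pow_right₀ h1 (by omega)

lemma abs_sub_mul_floor_div_le (x : ℝ) {s : ℝ} (hs : 0 < s) : |x - s * ⌊x / s⌋| ≤ s := by
  rw [mul_comm, abs_of_nonneg (Int.sub_floor_div_mul_nonneg x hs)]
  exact (Int.sub_floor_div_mul_lt x hs).le

lemma abs_sub_mul_ceil_div_le (x : ℝ) {s : ℝ} (hs : 0 < s) : |x - s * ⌈x / s⌉| ≤ s := by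
  have := abs_sub_mul_floor_div_le (-x) hs
  rwa [neg_div, Int.floor_neg, Int.cast_neg, mul_neg, sub_neg_eq_add, ← abs_neg, neg_add,
    neg_neg, ← sub_eq_add_neg] at this

/-- `g(x) = a_0 + a_1 x + ⋯ + a_{m-1} x^{m-1}`; the element `a ∈ ℤ[α]` is `coeffEval a α`. -/
def coeffEval {R : Type*} [CommRing R] {m : ℕ} (a : Fin m → ℤ) (x : R) : R :=
  ∑ i, (a i : R) * x ^ (i : ℕ)

section coeffEval

variable {m : ℕ} (a : Fin m → ℤ)

lemma map_coeffEval {R S : Type*} [CommRing R] [CommRing S] (φ : R →+* S) (x : R) :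
    φ (coeffEval a x) = coeffEval a (φ x) := by
  simp [coeffEval, map_sum]

lemma coeffEval_succ {R : Type*} [CommRing R] {n : ℕ} (a : Fin (n + 1) → ℤ) (x : R) :
    coeffEval a x = a 0 + ∑ i : Fin n, (a i.succ : R) * x ^ ((i : ℕ) + 1) := by
  simp [coeffEval, Fin.sum_univ_succ]

lemma norm_coeffEval_le {H r : ℝ} (ha : ∀ i, |(a i : ℝ)| ≤ H) (hr : 1 ≤ r) {z : ℂ}
    (hz : ‖z‖ ≤ r) : ‖coeffEval a z‖ ≤ H * (m * r ^ (m - 1)) := by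
  calc ‖coeffEval a z‖ ≤ ∑ i, ‖(a i : ℂ) * z ^ (i : ℕ)‖ := norm_sum_le _ _
    _ ≤ ∑ _i : Fin m, H * r ^ (m - 1) := by
      refine sum_le_sum fun i _ => ?_
      rw [norm_mul, norm_pow, Complex.norm_intCast]
      gcongr
      · exact (abs_nonneg _).trans (ha i)
      · exact ha i
      · exact (pow_le_pow_left₀ (norm_nonneg z) hz _).trans (pow_le_pow_right₀ hr (by omega))
    _ = H * (m * r ^ (m - 1)) := by
      rw [sum_const, card_univ, Fintype.card_fin, nsmul_eq_mul]; ring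

lemma abs_coeffEval_add_sub_le {H r x δ : ℝ} (ha : ∀ i, |(a i : ℝ)| ≤ H) (hr : 1 ≤ r)
    (hx : |x| ≤ r) (hxδ : |x + δ| ≤ r) :
    |coeffEval a (x + δ) - coeffEval a x| ≤ |δ| * (m * (m - 1) * H * r ^ (m - 2)) := by
  calc |coeffEval a (x + δ) - coeffEval a x|
      = |∑ i, (a i : ℝ) * ((x + δ) ^ (i : ℕ) - x ^ (i : ℕ))| := by
        simp only [coeffEval, ← sum_sub_distrib, mul_sub]
    _ ≤ ∑ i, |(a i : ℝ)| * |(x + δ) ^ (i : ℕ) - x ^ (i : ℕ)| := by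
        simpa only [abs_mul] using abs_sum_le_sum_abs
          (fun i => (a i : ℝ) * ((x + δ) ^ (i : ℕ) - x ^ (i : ℕ))) univ
    _ ≤ ∑ _i : Fin m, H * (|δ| * (m - 1) * r ^ (m - 2)) := by
      refine sum_le_sum fun i _ => ?_
      have hi : ((i : ℕ) : ℝ) ≤ m - 1 := by
        rw [le_sub_iff_add_le]; exact_mod_cast i.isLt
      gcongr
      · exact (abs_nonneg _).trans (ha i)
      · exact ha i
      calc |(x + δ) ^ (i : ℕ) - x ^ (i : ℕ)|
          ≤ |x + δ - x| * (i : ℕ) * max |x + δ| |x| ^ ((i : ℕ) - 1) := abs_pow_sub_pow_le ..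
        _ ≤ |δ| * (m - 1) * r ^ (m - 2) := by
          rw [add_sub_cancel_left]
          have hm : 0 ≤ (m : ℝ) - 1 := hi.trans' (Nat.cast_nonneg _)
          gcongr
          calc max |x + δ| |x| ^ ((i : ℕ) - 1) ≤ r ^ ((i : ℕ) - 1) := by
                gcongr; exact max_le hxδ hx
            _ ≤ r ^ (m - 2) := pow_le_pow_right₀ hr (by omega)
    _ = |δ| * (m * (m - 1) * H * r ^ (m - 2)) := by
      rw [sum_const, card_univ, Fintype.card_fin, nsmul_eq_mul]; ring

lemma abs_coeffEval_add_or_sub_sub_le {H α ε y : ℝ} (ha : ∀ i, |(a i : ℝ)| ≤ H) (hε : 0 ≤ ε)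
    (hy : y ∈ ({coeffEval a (α + ε), coeffEval a (α - ε)} : Set ℝ)) :
    |y - coeffEval a α| ≤ ε * (m * (m - 1) * H * ((1 + ε) * max 1 |α|) ^ (m - 2)) := by
  have hu : 1 ≤ max 1 |α| := le_max_left _ _
  have hα : |α| ≤ max 1 |α| := le_max_right _ _
  have hαε : |α| + ε ≤ (1 + ε) * max 1 |α| := by nlinarith
  have hr : 1 ≤ (1 + ε) * max 1 |α| := by nlinarith
  have hshift : ∀ δ, |δ| = ε → |α + δ| ≤ (1 + ε) * max 1 |α| := fun δ hδ =>
    (abs_add_le _ _).trans (hδ ▸ hαε)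
  obtain rfl | rfl := hy
  · simpa [abs_of_nonneg hε] using
      abs_coeffEval_add_sub_le a ha hr (by linarith) (hshift ε (abs_of_nonneg hε))
  · simpa [abs_of_nonneg hε, ← sub_eq_add_neg] using
      abs_coeffEval_add_sub_le a ha hr (by linarith) (hshift (-ε) (by simp [abs_of_nonneg hε]))

end coeffEval

lemma exists_coeffEval_eq_sub {n : ℕ} (a : Fin (n + 1) → ℤ) {H x : ℝ} (c : ℤ)
    (ha : ∀ i, |(a i : ℝ)| ≤ H) (hc : |coeffEval a x - c| ≤ H) :
    ∃ b : Fin (n + 1) → ℤ, coeffEval b x = coeffEval a x - c ∧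
      ∀ i, |(b i : ℝ)| ≤ H * Salpha (n + 1) x := by
  have hH : 0 ≤ H := (abs_nonneg _).trans hc
  have hS : 1 ≤ Salpha (n + 1) x := one_le_Salpha n.succ_pos x
  have htail : |∑ i : Fin n, (a i.succ : ℝ) * x ^ ((i : ℕ) + 1)| ≤
      H * (Salpha (n + 1) x - 1) := by
    rw [Salpha_succ, add_sub_cancel_left, mul_sum]
    refine (abs_sum_le_sum_abs _ _).trans (sum_le_sum fun i _ => ?_)
    rw [abs_mul, abs_pow]
    exact mul_le_mul_of_nonneg_right (ha _) (by positivity)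
  refine ⟨Fin.cons (a 0 - c) fun i => a i.succ, ?_, Fin.cases ?_ fun i => ?_⟩
  · rw [coeffEval_succ, coeffEval_succ]
    simp only [Fin.cons_zero, Fin.cons_succ]
    push_cast; ring
  · have : (a 0 - c : ℝ) =
        (coeffEval a x - c) - ∑ i : Fin n, (a i.succ : ℝ) * x ^ ((i : ℕ) + 1) := by
      rw [coeffEval_succ]; ring
    simp only [Fin.cons_zero, Int.cast_sub, this]
    calc _ ≤ H + H * (Salpha (n + 1) x - 1) := (abs_sub _ _).trans (add_le_add hc htail)
      _ = H * Salpha (n + 1) x := by ring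
  · simp only [Fin.cons_succ]
    exact (ha _).trans (le_mul_of_one_le_right hH hS)

lemma one_le_prod_norm_embeddings {K : Type*} [Field K] [Algebra ℚ K] [FiniteDimensional ℚ K]
    {β : K} (hβ : IsIntegral ℤ β) (hβ0 : β ≠ 0) : 1 ≤ ∏ σ : K →ₐ[ℚ] ℂ, ‖σ β‖ := by
  obtain ⟨N, hN⟩ := IsIntegrallyClosed.isIntegral_iff.mp (Algebra.isIntegral_norm ℚ hβ)
  have hN0 : N ≠ 0 := by
    rintro rfl
    exact Algebra.norm_ne_zero_iff.mpr hβ0 (by rw [← hN, map_zero])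
  rw [← norm_prod, ← Algebra.norm_eq_prod_embeddings, ← hN]
  simpa using (Int.cast_le (R := ℝ)).2 (Int.one_le_abs hN0)

lemma one_le_mul_pow_of_one_le_prod {ι : Type*} [Fintype ι] {g : ι → ℝ} {C : ℝ}
    (hg : ∀ i, 0 ≤ g i) (hC : ∀ i, g i ≤ C) (h : 1 ≤ ∏ i, g i) (i₀ : ι) :
    1 ≤ g i₀ * C ^ (Fintype.card ι - 1) := by
  classical
  calc 1 ≤ ∏ i, g i := h
    _ = g i₀ * ∏ i ∈ univ.erase i₀, g i := (mul_prod_erase _ _ (mem_univ i₀)).symm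
    _ ≤ g i₀ * ∏ _i ∈ univ.erase i₀, C :=
      mul_le_mul_of_nonneg_left (prod_le_prod (fun i _ => hg i) fun i _ => hC i) (hg i₀)
    _ = g i₀ * C ^ (Fintype.card ι - 1) := by
      rw [prod_const, card_erase_of_mem (mem_univ _), card_univ]

open IntermediateField in
lemma one_le_abs_coeffEval_mul_pow {m : ℕ} {f : ℤ[X]} (hmonic : f.Monic)
    (hdeg : f.natDegree = m) (hirr : Irreducible (f.map (Int.castRingHom ℚ))) {α : ℝ}
    (hroot : aeval α f = 0) {h : Fin m → ℤ} {H : ℝ} (hH : ∀ i, |(h i : ℝ)| ≤ H)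
    (hne : coeffEval h α ≠ 0) :
    1 ≤ |coeffEval h α| * (H * Malpha m f) ^ (m - 1) := by
  set fQ := f.map (Int.castRingHom ℚ)
  have hrootQ : aeval α fQ = 0 := (aeval_map_algebraMap ℚ α f).trans hroot
  have hint : IsIntegral ℚ α := ⟨fQ, hmonic.map _, by rwa [aeval_def] at hrootQ⟩
  have : FiniteDimensional ℚ ℚ⟮α⟯ := adjoin.finiteDimensional hint
  have hcard : Fintype.card (ℚ⟮α⟯ →ₐ[ℚ] ℂ) = m := by
    rw [AlgHom.card, adjoin.finrank hint, ← minpoly.eq_of_irreducible_of_monic hirr hrootQ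
      (hmonic.map _), hmonic.natDegree_map, hdeg]
  set αK := AdjoinSimple.gen ℚ α
  have hαK : aeval αK f = 0 :=
    (algebraMap ℚ⟮α⟯ ℝ).injective (by rw [← aeval_algebraMap_apply, map_zero]; exact hroot)
  set β := coeffEval h αK
  have hβ : IsIntegral ℤ β :=
    IsIntegral.sum _ fun i _ => isIntegral_algebraMap.mul (IsIntegral.pow ⟨f, hmonic, hαK⟩ _)
  have hβα : algebraMap ℚ⟮α⟯ ℝ β = coeffEval h α := map_coeffEval h _ αK
  have hβ0 : β ≠ 0 := by rintro hβ0; rw [hβ0, map_zero] at hβα; exact hne hβα.symm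
  have hbound : ∀ σ : ℚ⟮α⟯ →ₐ[ℚ] ℂ, ‖σ β‖ ≤ H * Malpha m f := by
    intro σ
    have hσα : aeval (σ αK) f = 0 := by
      simpa [hαK] using aeval_algHom_apply (σ.restrictScalars ℤ) αK f
    rw [← AlgHom.coe_toRingHom, map_coeffEval]
    exact norm_coeffEval_le h hH (le_add_of_nonneg_right (by simp [fninf]))
      (norm_le_one_add_fninf hmonic hdeg hσα)
  let σ₀ : ℚ⟮α⟯ →ₐ[ℚ] ℂ := (Complex.ofRealHom.comp (algebraMap ℚ⟮α⟯ ℝ)).toRatAlgHom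
  have hσ₀ : ‖σ₀ β‖ = |coeffEval h α| := by simp [σ₀, hβα]
  have := one_le_mul_pow_of_one_le_prod (fun _ => norm_nonneg _) hbound
    (one_le_prod_norm_embeddings hβ hβ0) σ₀
  rwa [hcard, hσ₀] at this

lemma one_le_abs_coeffEval_sub_mul_pow {m : ℕ} {f : ℤ[X]} (hmonic : f.Monic)
    (hdeg : f.natDegree = m) (hirr : Irreducible (f.map (Int.castRingHom ℚ))) {α : ℝ}
    (hroot : aeval α f = 0) {a : Fin m → ℤ} {H : ℝ} {c : ℤ} (ha : ∀ i, |(a i : ℝ)| ≤ H)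
    (hc : |coeffEval a α - c| ≤ H) (hne : coeffEval a α ≠ c) :
    1 ≤ |coeffEval a α - c| * (H * Salpha m α * Malpha m f) ^ (m - 1) := by
  obtain ⟨n, rfl⟩ : ∃ n, m = n + 1 := by
    have := hirr.natDegree_pos
    rw [hmonic.natDegree_map, hdeg] at this
    exact ⟨m - 1, by omega⟩
  obtain ⟨b, hb, hbH⟩ := exists_coeffEval_eq_sub a c ha hc
  rw [← hb]
  exact one_le_abs_coeffEval_mul_pow hmonic hdeg hirr hroot hbH (hb ▸ sub_ne_zero.2 hne)

lemma mul_pow_Malpha_le_Palpha {m : ℕ} (hm : 2 ≤ m) {f : ℤ[X]} (hN : √2 ≤ normTwo (m + 1) f)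
    {ε M : ℝ} (hε : 0 ≤ ε) (hεm : ε ≤ 1 / (m - 1)) (hM : 0 ≤ M) (x : ℝ) :
    m * (m - 1) * M * ((1 + ε) * max 1 |x|) ^ (m - 2) * (M * Salpha m x * Malpha m f) ^ (m - 1)
      ≤ (m - 1) * (M ^ m * Palpha m f * Salpha m x ^ (m + 1)) := by
  obtain ⟨k, rfl⟩ : ∃ k, m = k + 2 := ⟨m - 2, by omega⟩
  have hεk : ε ≤ 1 / (k + 1) := by convert hεm using 2; push_cast; ring
  have hS : 1 ≤ Salpha (k + 2) x := one_le_Salpha (by omega) x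
  have hMα := Malpha_nonneg (k + 2) f
  have hu : max 1 |x| ^ k ≤ Salpha (k + 2) x := max_one_abs_pow_le_Salpha (by omega) x
  have hsqrt : (1 + ε) ^ k ≤ normTwo (k + 2 + 1) f ^ (k + 1) :=
    (one_add_pow_le_sqrt_two_pow hε hεk).trans (by gcongr)
  have hN0 : 0 ≤ normTwo (k + 2 + 1) f := Real.sqrt_nonneg _
  simp only [Palpha, Nat.add_sub_cancel, show k + 2 - 1 = k + 1 from rfl]
  push_cast
  calc ((k : ℝ) + 2) * (k + 2 - 1) * M * ((1 + ε) * max 1 |x|) ^ k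
        * (M * Salpha (k + 2) x * Malpha (k + 2) f) ^ (k + 1)
      = (k + 1) * (k + 2) * M ^ (k + 2) * ((1 + ε) ^ k * max 1 |x| ^ k
          * Salpha (k + 2) x ^ (k + 1) * Malpha (k + 2) f ^ (k + 1)) := by rw [mul_pow]; ring
    _ ≤ (k + 1) * (k + 2) * M ^ (k + 2) * (normTwo (k + 2 + 1) f ^ (k + 1) * Salpha (k + 2) x
          * Salpha (k + 2) x ^ (k + 1) * (Malpha (k + 2) f + √(k + 2)) ^ (k + 1)) := by
      gcongr
      exact le_add_of_nonneg_right (Real.sqrt_nonneg _)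
    _ ≤ (k + 1) * (k + 2) * M ^ (k + 2) * (normTwo (k + 2 + 1) f ^ (k + 1)
          * Salpha (k + 2) x ^ 2 * Salpha (k + 2) x ^ (k + 1)
          * (Malpha (k + 2) f + √(k + 2)) ^ (k + 1)) := by
      gcongr
      exact le_self_pow₀ hS two_ne_zero
    _ = (k + 2 - 1) * (M ^ (k + 2) * ((k + 2) * normTwo (k + 2 + 1) f ^ (k + 1)
          * (Malpha (k + 2) f + √(k + 2)) ^ (k + 1)) * Salpha (k + 2) x ^ (k + 2 + 1)) := by ring

lemma mul_pow_Malpha_lt_one {m : ℕ} (hm : 2 ≤ m) {f : ℤ[X]} (hmonic : f.Monic)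
    (hdeg : f.natDegree = m) (hirr : Irreducible (f.map (Int.castRingHom ℚ))) {ε M d : ℝ}
    (hε : 0 ≤ ε) (hM : 0 ≤ M) (x : ℝ)
    (hd : d ≥ ((m : ℝ) - 1) * (1 + M ^ m * Palpha m f * Salpha m x ^ (m + 1)))
    (hεd : ε ≤ 1 / d) :
    ε * (m * (m - 1) * M * ((1 + ε) * max 1 |x|) ^ (m - 2))
      * (M * Salpha m x * Malpha m f) ^ (m - 1) < 1 := by
  have hX : 0 ≤ M ^ m * Palpha m f * Salpha m x ^ (m + 1) := by
    have := Palpha_nonneg m f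
    have := one_le_Salpha (m := m) (by omega) x
    positivity
  have hm1 : (1 : ℝ) ≤ m - 1 := by rw [le_sub_iff_add_le]; exact_mod_cast hm
  have hd1 : m - 1 ≤ d := hd.trans' (by nlinarith)
  have hN := sqrt_two_le_normTwo (by omega) hmonic hdeg (by
    simpa using coeff_zero_ne_zero_of_irreducible hirr (by rwa [hmonic.natDegree_map, hdeg]))
  have hbound := mul_pow_Malpha_le_Palpha hm hN hε (hεd.trans (one_div_le_one_div_of_le
    (by linarith) hd1)) hM x
  calc _ = ε * (m * (m - 1) * M * ((1 + ε) * max 1 |x|) ^ (m - 2)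
        * (M * Salpha m x * Malpha m f) ^ (m - 1)) := by ring
    _ ≤ ε * ((m - 1) * (M ^ m * Palpha m f * Salpha m x ^ (m + 1))) :=
      mul_le_mul_of_nonneg_left hbound hε
    _ ≤ 1 / d * ((m - 1) * (M ^ m * Palpha m f * Salpha m x ^ (m + 1))) :=
      mul_le_mul_of_nonneg_right hεd (by positivity)
    _ < 1 := by
      rw [one_div_mul_eq_div, div_lt_one (by linarith)]
      nlinarith

theorem stmt_9_general (m : ℕ) (hm : 2 ≤ m) (f : Polynomial ℤ)
    (hmonic : f.Monic) (hdeg : f.natDegree = m)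
    (hirr : Irreducible (f.map (Int.castRingHom ℚ)))
    (α : ℝ) (hroot : Polynomial.aeval α f = 0)
    (a : Fin m → ℤ) (s : ℤ) (hs : 0 < s)
    (hnotint : ∀ z : ℤ, (∑ i, (a i : ℝ) * α ^ (i : ℕ)) / (s : ℝ) ≠ (z : ℝ))
    (d : ℝ)
    (hd : d ≥ ((m : ℝ) - 1) *
      (1 + ((max (opc a) s : ℤ) : ℝ) ^ m * Palpha m f * Salpha m α ^ (m + 1))) :
    ∀ ε : ℝ, 0 < ε → ε ≤ 1 / d →
      ∀ aε ∈ ({(∑ i, (a i : ℝ) * (α + ε) ^ (i : ℕ)),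
          (∑ i, (a i : ℝ) * (α - ε) ^ (i : ℕ))} : Set ℝ),
        |aε - ∑ i, (a i : ℝ) * α ^ (i : ℕ)| <
            |(∑ i, (a i : ℝ) * α ^ (i : ℕ)) -
              (s : ℝ) * (⌊(∑ i, (a i : ℝ) * α ^ (i : ℕ)) / (s : ℝ)⌋ : ℤ)| ∧
          |aε - ∑ i, (a i : ℝ) * α ^ (i : ℕ)| <
            |(∑ i, (a i : ℝ) * α ^ (i : ℕ)) -
              (s : ℝ) * (⌈(∑ i, (a i : ℝ) * α ^ (i : ℕ)) / (s : ℝ)⌉ : ℤ)| := by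
  intro ε hε hεd aε haε
  set M : ℝ := ((max (opc a) s : ℤ) : ℝ)
  have hs' : (0 : ℝ) < s := by exact_mod_cast hs
  have hsM : (s : ℝ) ≤ M := Int.cast_le.2 (le_max_right _ _)
  have haM : ∀ i, |(a i : ℝ)| ≤ M := fun i =>
    (abs_le_opc a i).trans (Int.cast_le.2 (le_max_left _ _))
  have hupper := abs_coeffEval_add_or_sub_sub_le a haM hε.le haε
  have hsmall := mul_pow_Malpha_lt_one hm hmonic hdeg hirr hε.le (hs'.le.trans hsM) α hd hεd
  have hL : 0 ≤ (M * Salpha m α * Malpha m f) ^ (m - 1) := by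
    have := Malpha_nonneg m f
    have := one_le_Salpha (m := m) (by omega) α
    have := hs'.le.trans hsM
    positivity
  have hclose : ∀ z : ℤ, |coeffEval a α - s * z| ≤ s →
      |aε - coeffEval a α| < |coeffEval a α - s * z| := by
    intro z hz
    have hne : coeffEval a α ≠ ((s * z : ℤ) : ℝ) := fun h => hnotint z <| by
      rw [show (∑ i, (a i : ℝ) * α ^ (i : ℕ)) = coeffEval a α from rfl, h]; push_cast; field_simp
    have hlower := one_le_abs_coeffEval_sub_mul_pow hmonic hdeg hirr hroot haM (c := s * z)
      (by push_cast; linarith) hne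
    push_cast at hlower
    nlinarith [mul_le_mul_of_nonneg_right hupper hL]
  exact ⟨hclose _ (abs_sub_mul_floor_div_le _ hs'), hclose _ (abs_sub_mul_ceil_div_le _ hs')⟩

theorem stmt_9 (m : ℕ) (hm : 2 ≤ m) (f : Polynomial ℤ)
    (hmonic : f.Monic) (hdeg : f.natDegree = m)
    (hirr : Irreducible (f.map (Int.castRingHom ℚ)))
    (α : ℝ) (hroot : Polynomial.aeval α f = 0)
    (a : Fin m → ℤ) (s : ℤ) (hs : 0 < s)
    (hnotint : ∀ z : ℤ, (∑ i, (a i : ℝ) * α ^ (i : ℕ)) / (s : ℝ) ≠ (z : ℝ))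
    (d : ℝ) (hd0 : 0 < d)
    (hd : d ≥ ((m : ℝ) - 1) *
      (1 + ((max (opc a) s : ℤ) : ℝ) ^ m * Palpha m f * Salpha m α ^ (m + 1))) :
    ∀ ε : ℝ, 0 < ε → ε ≤ 1 / d →
      ∀ aε ∈ ({(∑ i, (a i : ℝ) * (α + ε) ^ (i : ℕ)),
          (∑ i, (a i : ℝ) * (α - ε) ^ (i : ℕ))} : Set ℝ),
        |aε - ∑ i, (a i : ℝ) * α ^ (i : ℕ)| <
            |(∑ i, (a i : ℝ) * α ^ (i : ℕ)) -
              (s : ℝ) * (⌊(∑ i, (a i : ℝ) * α ^ (i : ℕ)) / (s : ℝ)⌋ : ℤ)| ∧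
          |aε - ∑ i, (a i : ℝ) * α ^ (i : ℕ)| <
            |(∑ i, (a i : ℝ) * α ^ (i : ℕ)) -
              (s : ℝ) * (⌈(∑ i, (a i : ℝ) * α ^ (i : ℕ)) / (s : ℝ)⌉ : ℤ)| :=
  stmt_9_general m hm f hmonic hdeg hirr α hroot a s hs hnotint d hd
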